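/- arXiv:cs/0309041 — 4 statements merged into one kernel-verified Lean document; each statement's English description precedes it below -/
import Mathlib

section
/- If the intersection I of two convex sets in the sphere S^n (n > 0) is not convex, then I contains a pair of antipodal points. Here a set S ⊆ S^n is called convex if for any two points p, q ∈ S there exists at least one minimizing geodesic segment from p to q contained in S. -/
local notation "⟪" x ", " y "⟫" => @inner ℝ _ _ x y

/-- A minimizing geodesic segment on the unit sphere from `p` to `q`:
the image of `t ↦ cos t • p + sin t • u` for `t ∈ [0, θ]`, where `u` is a unit
vector orthogonal to `p` and `θ ∈ [0, π]` with `q = cos θ • p + sin θ • u`. -/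
def SphSegment {E : Type*} [NormedAddCommGroup E] [InnerProductSpace ℝ E]
    (p q : E) (A : Set E) : Prop :=
  ∃ u : E, ∃ θ : ℝ, ‖u‖ = 1 ∧ ⟪p, u⟫ = (0 : ℝ) ∧ θ ∈ Set.Icc (0 : ℝ) Real.pi ∧
    q = Real.cos θ • p + Real.sin θ • u ∧
    A = (fun t : ℝ => Real.cos t • p + Real.sin t • u) '' Set.Icc 0 θ

/-- A subset `S` of the unit sphere is (spherically) convex if for any two points
`p, q ∈ S` there exists at least one minimizing geodesic segment from `p` to `q`
contained in `S`. -/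
def SphConvex {E : Type*} [NormedAddCommGroup E] [InnerProductSpace ℝ E]
    (S : Set E) : Prop :=
  ∀ p ∈ S, ∀ q ∈ S, ∃ A : Set E, SphSegment p q A ∧ A ⊆ S

lemma sphSegment_unique {E : Type*} [NormedAddCommGroup E] [InnerProductSpace ℝ E]
    (p q : E) (hp : ‖p‖ = 1) (hq : q ≠ -p) (A B : Set E)
    (hA : SphSegment p q A) (hB : SphSegment p q B) : A = B := by
  obtain ⟨u, θ, hu, hpu, hθ, hqu, hAeq⟩ := hA
  obtain ⟨v, φ, hv, hpv, hφ, hqv, hBeq⟩ := hB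
  have key : ∀ (w : E) (t : ℝ), ⟪p, w⟫ = (0 : ℝ) →
      q = Real.cos t • p + Real.sin t • w → Real.cos t = ⟪p, q⟫ := by
    intro w t hw hqe
    rw [hqe, inner_add_right, real_inner_smul_right, real_inner_smul_right,
      real_inner_self_eq_norm_sq, hp, hw]
    ring
  have hθφ : θ = φ := by
    apply Real.injOn_cos hθ hφ
    rw [key u θ hpu hqu, key v φ hpv hqv]
  subst hθφ
  rcases eq_or_lt_of_le hθ.1 with h0 | h0
  · subst h0
    rw [hAeq, hBeq]
    simp
  · have hlt : θ < Real.pi := by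
      rcases lt_or_eq_of_le hθ.2 with h1 | h1
      · exact h1
      · exfalso
        apply hq
        rw [hqu, h1]
        simp
    have hs : Real.sin θ ≠ 0 := ne_of_gt (Real.sin_pos_of_pos_of_lt_pi h0 hlt)
    have huv : u = v := by
      have : Real.sin θ • u = Real.sin θ • v := by
        have := hqu.symm.trans hqv
        linear_combination (norm := module) this
      exact smul_right_injective E hs this
    rw [hAeq, hBeq, huv]

/-- If the intersection of two convex sets in `S^n` (n > 0) is not convex, then
it contains a pair of antipodal points. -/
theorem intersection_not_convex_antipodal (n : ℕ) (hn : 0 < n)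
    (S₁ S₂ : Set (EuclideanSpace ℝ (Fin (n + 1))))
    (hS₁ : S₁ ⊆ Metric.sphere (0 : EuclideanSpace ℝ (Fin (n + 1))) 1)
    (hS₂ : S₂ ⊆ Metric.sphere (0 : EuclideanSpace ℝ (Fin (n + 1))) 1)
    (hc₁ : SphConvex S₁) (hc₂ : SphConvex S₂)
    (h : ¬ SphConvex (S₁ ∩ S₂)) :
    ∃ p ∈ S₁ ∩ S₂, -p ∈ S₁ ∩ S₂ := by
  by_contra hcon
  push_neg at hcon
  apply h
  intro p hp q hq
  obtain ⟨A₁, hA₁, hA₁s⟩ := hc₁ p hp.1 q hq.1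
  obtain ⟨A₂, hA₂, hA₂s⟩ := hc₂ p hp.2 q hq.2
  have hp1 : ‖p‖ = 1 := by
    have := hS₁ hp.1
    simpa [mem_sphere_zero_iff_norm] using this
  have hqne : q ≠ -p := fun hqe => hcon p hp (hqe ▸ hq)
  have hAB := sphSegment_unique p q hp1 hqne A₁ A₂ hA₁ hA₂
  exact ⟨A₁, hA₁, fun x hx => ⟨hA₁s hx, hA₂s (hAB ▸ hx)⟩⟩
end

section
/- The closure of a convex subset of the sphere S^n is convex, where convexity means: for any two points of the set, some minimizing geodesic segment joining them lies in the set. -/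
local notation "⟪" x ", " y "⟫" => @inner ℝ _ _ x y

/-- The closure of a convex subset of the sphere `S^n` is convex. -/
theorem closure_sphConvex (n : ℕ) (S : Set (EuclideanSpace ℝ (Fin (n + 1))))
    (hS : S ⊆ Metric.sphere (0 : EuclideanSpace ℝ (Fin (n + 1))) 1)
    (hconv : SphConvex S) :
    SphConvex (closure S) := by
  intro p hp q hq
  obtain ⟨pk, hpkS, hpk⟩ := mem_closure_iff_seq_limit.mp hp
  obtain ⟨qk, hqkS, hqk⟩ := mem_closure_iff_seq_limit.mp hq
  choose A hA hAS using fun k => hconv (pk k) (hpkS k) (qk k) (hqkS k)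
  choose u θ hu hpu hθ hqeq hAeq using hA
  have hcompact : IsCompact ((Metric.sphere (0 : EuclideanSpace ℝ (Fin (n + 1))) 1)
      ×ˢ Set.Icc (0 : ℝ) Real.pi) := (isCompact_sphere 0 1).prod isCompact_Icc
  have hmem : ∀ k, (u k, θ k) ∈ (Metric.sphere (0 : EuclideanSpace ℝ (Fin (n + 1))) 1)
      ×ˢ Set.Icc (0 : ℝ) Real.pi := fun k =>
    ⟨by simpa [mem_sphere_zero_iff_norm] using hu k, hθ k⟩
  obtain ⟨⟨u', θ'⟩, ⟨hu', hθ'⟩, φ, hφ, hlim⟩ := hcompact.tendsto_subseq hmem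
  have hlimu : Filter.Tendsto (fun k => u (φ k)) Filter.atTop (nhds u') :=
    (continuous_fst.tendsto _).comp hlim
  have hlimθ : Filter.Tendsto (fun k => θ (φ k)) Filter.atTop (nhds θ') :=
    (continuous_snd.tendsto _).comp hlim
  have hlimp : Filter.Tendsto (fun k => pk (φ k)) Filter.atTop (nhds p) :=
    hpk.comp hφ.tendsto_atTop
  have hlimq : Filter.Tendsto (fun k => qk (φ k)) Filter.atTop (nhds q) :=
    hqk.comp hφ.tendsto_atTop
  refine ⟨_, ⟨u', θ', mem_sphere_zero_iff_norm.mp hu', ?_, hθ', ?_, rfl⟩, ?_⟩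
  · -- ⟪p, u'⟫ = 0
    have h1 : Filter.Tendsto (fun k => ⟪pk (φ k), u (φ k)⟫) Filter.atTop
        (nhds (⟪p, u'⟫ : ℝ)) := hlimp.inner hlimu
    have h2 : Filter.Tendsto (fun k => ⟪pk (φ k), u (φ k)⟫) Filter.atTop
        (nhds (0 : ℝ)) := by
      simpa [fun k => hpu (φ k)] using tendsto_const_nhds
        (α := ℝ) (x := (0:ℝ)) (f := Filter.atTop (α := ℕ))
    exact tendsto_nhds_unique h1 h2
  · -- q = cos θ' • p + sin θ' • u'
    have h1 : Filter.Tendsto (fun k => Real.cos (θ (φ k)) • pk (φ k)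
        + Real.sin (θ (φ k)) • u (φ k)) Filter.atTop
        (nhds (Real.cos θ' • p + Real.sin θ' • u')) :=
      (((Real.continuous_cos.tendsto _).comp hlimθ).smul hlimp).add
        (((Real.continuous_sin.tendsto _).comp hlimθ).smul hlimu)
    have h2 : Filter.Tendsto (fun k => qk (φ k)) Filter.atTop
        (nhds (Real.cos θ' • p + Real.sin θ' • u')) := by
      refine h1.congr fun k => ?_
      exact (hqeq (φ k)).symm
    exact tendsto_nhds_unique hlimq h2
  · -- segment ⊆ closure S
    rintro x ⟨t, ht, rfl⟩
    have hseq : ∀ k, Real.cos (min t (θ (φ k))) • pk (φ k)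
        + Real.sin (min t (θ (φ k))) • u (φ k) ∈ S := by
      intro k
      apply hAS (φ k)
      rw [hAeq (φ k)]
      exact ⟨min t (θ (φ k)), ⟨le_min ht.1 (hθ (φ k)).1, min_le_right _ _⟩, rfl⟩
    have hmin : Filter.Tendsto (fun k => min t (θ (φ k))) Filter.atTop (nhds t) := by
      have := (tendsto_const_nhds : Filter.Tendsto (fun _ : ℕ => t) Filter.atTop (nhds t)).min hlimθ
      rwa [min_eq_left ht.2] at this
    have htend : Filter.Tendsto (fun k => Real.cos (min t (θ (φ k))) • pk (φ k)
        + Real.sin (min t (θ (φ k))) • u (φ k)) Filter.atTop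
        (nhds (Real.cos t • p + Real.sin t • u')) :=
      (((Real.continuous_cos.tendsto _).comp hmin).smul hlimp).add
        (((Real.continuous_sin.tendsto _).comp hmin).smul hlimu)
    exact mem_closure_of_tendsto htend (Filter.Eventually.of_forall hseq)
end

section
/- Let P be a polygon in the plane given by a cyclic sequence of vertices v_0, ..., v_{m-1} (m ≥ 3), forming a closed polygonal curve. If at every vertex the polygon is locally convex — i.e., for every i the cross product (v_{i+1} − v_i) × (v_i − v_{i−1}) has the same (weakly positive) sign — and the edge directions make exactly one full turn (total turning 2π), then the polygonal curve is the boundary of a convex polygon. -/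
/-!
Write `ω c w = Im (conj c * w)` for the cross product. Summing the exterior angles gives a
nondecreasing lift `θ = edgeAngle e` of the edge directions with `θ m = θ 0 + 2π`, and along
edge `n` the height `ω c (v n)` of the vertices in a direction `c` changes by
`‖c‖ ‖e n‖ sin (θ n - arg c)`. A nondecreasing phase spanning at most `2π` cannot make `sin`
change sign `+ - + -`, so this height is unimodal along the polygon. For `c = e i` this puts
every vertex on the left of the line of edge `i`, so each edge lies on the frontier of the hull.
Conversely a frontier point of the hull maximizes some height `ω c` over it (a supporting line);
it is a convex combination of highest vertices, which by unimodality are consecutive, and the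
edges joining them form a connected subset of the supporting line, hence a segment containing
the point.
-/

open Finset Real ComplexConjugate
open Complex (arg)

attribute [local instance] Complex.finrank_real_complex_fact

local notation "ω" => Complex.orientation.areaForm

theorem exists_mem_Ico_lt_succ {α : Type*} [LinearOrder α] {f : ℕ → α} {a b : ℕ} (hab : a ≤ b)
    (h : f a < f b) : ∃ k ∈ Ico a b, f k < f (k + 1) := by
  induction hab with
  | refl => exact absurd h (lt_irrefl _)
  | @step b hab ih =>
    by_cases hb : f a < f b
    · obtain ⟨k, hk, hlt⟩ := ih hb
      exact ⟨k, Ico_subset_Ico_right b.le_succ hk, hlt⟩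
    · exact ⟨b, mem_Ico.2 ⟨hab, b.lt_succ_self⟩, (not_lt.1 hb).trans_lt h⟩

theorem sin_nonneg_of_sin_pos_neg_pos {x₁ x₂ x₃ x₄ : ℝ} (h₁₂ : x₁ ≤ x₂) (h₂₃ : x₂ ≤ x₃)
    (h₃₄ : x₃ ≤ x₄) (h₄₁ : x₄ ≤ x₁ + 2 * π) (s₁ : 0 < sin x₁) (s₂ : sin x₂ < 0)
    (s₃ : 0 < sin x₃) : 0 ≤ sin x₄ := by
  obtain ⟨hn₀, hn₁⟩ := sub_toIcoDiv_zsmul_mem_Ico two_pi_pos 0 x₁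
  set n := toIcoDiv two_pi_pos 0 x₁
  rw [zsmul_eq_mul] at hn₀ hn₁
  rw [← sin_sub_int_mul_two_pi _ n] at s₁ s₂ s₃ ⊢
  -- with `0 ≤ x₁ < 2π`, the signs force `x₁ < π < x₂` and `2π < x₃ ≤ x₄ ≤ x₁ + 2π < 3π`
  have hπ₁ : x₁ - n * (2 * π) < π := by
    by_contra! h
    have := sin_nonneg_of_nonneg_of_le_pi (x := x₁ - n * (2 * π) - π) (by linarith) (by linarith)
    rw [sin_sub_pi] at this
    linarith
  have hπ₂ : π < x₂ - n * (2 * π) := by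
    by_contra! h
    linarith [sin_nonneg_of_nonneg_of_le_pi (x := x₂ - n * (2 * π)) (by linarith) h]
  have hπ₃ : 2 * π < x₃ - n * (2 * π) := by
    by_contra! h
    have := sin_nonneg_of_nonneg_of_le_pi (x := x₃ - n * (2 * π) - π) (by linarith) (by linarith)
    rw [sin_sub_pi] at this
    linarith
  rw [← sin_sub_two_pi]
  exact sin_nonneg_of_nonneg_of_le_pi (by linarith) (by linarith)

section SinIncrements

variable {g r φ : ℕ → ℝ}

theorem exists_sin_pos_of_lt (hr : ∀ k, 0 ≤ r k) (hg : ∀ k, g (k + 1) - g k = r k * sin (φ k))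
    {a b : ℕ} (hab : a ≤ b) (h : g a < g b) : ∃ k ∈ Ico a b, 0 < sin (φ k) := by
  obtain ⟨k, hk, hlt⟩ := exists_mem_Ico_lt_succ hab h
  refine ⟨k, hk, pos_of_mul_pos_right ?_ (hr k)⟩
  linarith [hg k]

theorem exists_sin_neg_of_lt (hr : ∀ k, 0 ≤ r k) (hg : ∀ k, g (k + 1) - g k = r k * sin (φ k))
    {a b : ℕ} (hab : a ≤ b) (h : g b < g a) : ∃ k ∈ Ico a b, sin (φ k) < 0 := by
  obtain ⟨k, hk, hlt⟩ := exists_mem_Ico_lt_succ (f := fun k ↦ -g k) hab (neg_lt_neg h)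
  refine ⟨k, hk, neg_of_mul_neg_right ?_ (hr k)⟩
  linarith [hg k]

/-- While `φ ≤ π` the sequence increases, afterwards it decreases back to `g m = g 0`. -/
theorem le_of_sin_increments (hφ : Monotone φ) (hr : ∀ k, 0 ≤ r k)
    (hg : ∀ k, g (k + 1) - g k = r k * sin (φ k)) {m n : ℕ} (h₀ : 0 ≤ φ 0) (hm : φ m ≤ 2 * π)
    (hper : g m = g 0) (hn : n ≤ m) : g 0 ≤ g n := by
  by_contra! hlt
  rcases le_or_gt (φ n) π with hπ | hπ
  · obtain ⟨k, hk, hsin⟩ := exists_sin_neg_of_lt hr hg n.zero_le hlt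
    obtain ⟨-, hkn⟩ := mem_Ico.1 hk
    have := sin_nonneg_of_nonneg_of_le_pi (h₀.trans (hφ k.zero_le)) ((hφ hkn.le).trans hπ)
    linarith
  · obtain ⟨k, hk, hsin⟩ := exists_sin_pos_of_lt hr hg hn (hper ▸ hlt)
    obtain ⟨hnk, hkm⟩ := mem_Ico.1 hk
    have := sin_nonneg_of_nonneg_of_le_pi (x := φ k - π) (by linarith [hφ hnk])
      (by linarith [hφ hkm.le])
    rw [sin_sub_pi] at this
    linarith

theorem min_le_of_sin_increments (hφ : Monotone φ) (hr : ∀ k, 0 ≤ r k)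
    (hg : ∀ k, g (k + 1) - g k = r k * sin (φ k)) {m : ℕ} (hm : φ m ≤ φ 0 + 2 * π)
    (hper : g m = g 0) (hmin : ∀ k, g 0 ≤ g k) {a b n : ℕ} (han : a ≤ n) (hnb : n ≤ b)
    (hbm : b ≤ m) : min (g a) (g b) ≤ g n := by
  by_contra! hlt
  obtain ⟨hna, hnb'⟩ := lt_min_iff.1 hlt
  obtain ⟨k₁, hk₁, s₁⟩ := exists_sin_pos_of_lt hr hg a.zero_le ((hmin n).trans_lt hna)
  obtain ⟨k₂, hk₂, s₂⟩ := exists_sin_neg_of_lt hr hg han hna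
  obtain ⟨k₃, hk₃, s₃⟩ := exists_sin_pos_of_lt hr hg hnb hnb'
  obtain ⟨k₄, hk₄, s₄⟩ := exists_sin_neg_of_lt hr hg hbm (hper ▸ (hmin n).trans_lt hnb')
  simp only [mem_Ico] at hk₁ hk₂ hk₃ hk₄
  have := sin_nonneg_of_sin_pos_neg_pos (hφ (by omega : k₁ ≤ k₂)) (hφ (by omega : k₂ ≤ k₃))
    (hφ (by omega : k₃ ≤ k₄)) (by linarith [hφ hk₄.2.le, hφ k₁.zero_le]) s₁ s₂ s₃
  linarith

end SinIncrements

theorem mem_convexHull_setOf_eq_of_forall_le {𝕜 E : Type*} [Field 𝕜] [LinearOrder 𝕜]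
    [IsStrictOrderedRing 𝕜] [AddCommGroup E] [Module 𝕜 E] {s : Set E} {f : E →ₗ[𝕜] 𝕜} {z : E}
    (hz : z ∈ convexHull 𝕜 s) (hmax : ∀ y ∈ s, f y ≤ f z) :
    z ∈ convexHull 𝕜 {y ∈ s | f y = f z} := by
  classical
  obtain ⟨ι, t, w, p, hw₀, hw₁, hps, hzt⟩ := (_root_.convexHull_eq s).subset hz
  have hfz : f z = ∑ i ∈ t, w i * f (p i) := by
    simp [← hzt, centerMass_eq_of_sum_1 _ _ hw₁, map_sum]
  -- the weights sum to one, so the nonnegative gaps `f z - f (p i)` average to zero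
  have hgap : ∀ i ∈ t, w i * (f z - f (p i)) = 0 := by
    refine (sum_eq_zero_iff_of_nonneg fun i hi ↦
      mul_nonneg (hw₀ i hi) (sub_nonneg.2 (hmax _ (hps i hi)))).1 ?_
    simp only [mul_sub, sum_sub_distrib, ← sum_mul, hw₁, one_mul, ← hfz, sub_self]
  have hmem : {i ∈ t | w i ≠ 0}.centerMass w p ∈ convexHull 𝕜 {y ∈ s | f y = f z} := by
    refine centerMass_mem_convexHull _ (fun i hi ↦ hw₀ i (mem_filter.1 hi).1) ?_ fun i hi ↦ ?_
    · rw [sum_filter_ne_zero, hw₁]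
      exact one_pos
    · obtain ⟨hit, hwi⟩ := mem_filter.1 hi
      exact ⟨hps i hit, (sub_eq_zero.1 ((mul_eq_zero.1 (hgap i hit)).resolve_left hwi)).symm⟩
  rwa [centerMass_filter_ne_zero, hzt] at hmem

theorem Convex.exists_forall_le_of_notMem_interior {E : Type*} [NormedAddCommGroup E]
    [NormedSpace ℝ E] [FiniteDimensional ℝ E] {K : Set E} (hK : Convex ℝ K) {x : E} (hxK : x ∈ K)
    (hx : x ∉ interior K) : ∃ f : E →ₗ[ℝ] ℝ, f ≠ 0 ∧ ∀ w ∈ K, f w ≤ f x := by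
  by_cases hint : (interior K).Nonempty
  · obtain ⟨f, hf⟩ := geometric_hahn_banach_open_point hK.interior isOpen_interior hx
    obtain ⟨y, hy⟩ := hint
    refine ⟨f, fun h ↦ (hf y hy).ne ?_, fun w hw ↦ ?_⟩
    · simp only [← ContinuousLinearMap.coe_coe, h, LinearMap.zero_apply]
    · have hcl : K ⊆ closure (interior K) :=
        hK.closure_interior_eq_closure_of_nonempty_interior ⟨y, hy⟩ ▸ subset_closure
      exact closure_minimal (fun a ha ↦ (hf a ha).le) (isClosed_le f.continuous continuous_const)
        (hcl hw)
  · -- a convex set with empty interior lies in a proper affine subspace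
    rw [hK.interior_nonempty_iff_affineSpan_eq_top,
      ← AffineSubspace.direction_eq_top_iff_of_nonempty ((Set.nonempty_of_mem hxK).mono
        (subset_affineSpan ℝ K)), ← Ne, ← lt_top_iff_ne_top] at hint
    obtain ⟨f, hf, hker⟩ := Submodule.exists_le_ker_of_lt_top _ hint
    refine ⟨f, hf, fun w hw ↦ le_of_eq ?_⟩
    have := hker (AffineSubspace.vsub_mem_direction (subset_affineSpan ℝ K hw)
      (subset_affineSpan ℝ K hxK))
    rwa [LinearMap.mem_ker, vsub_eq_sub, map_sub, sub_eq_zero] at this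

theorem Convex.mem_frontier_iff_exists_forall_le {E : Type*} [NormedAddCommGroup E]
    [NormedSpace ℝ E] [FiniteDimensional ℝ E] {K : Set E} (hK : Convex ℝ K) (hKc : IsClosed K)
    {x : E} : x ∈ frontier K ↔ x ∈ K ∧ ∃ f : E →ₗ[ℝ] ℝ, f ≠ 0 ∧ ∀ w ∈ K, f w ≤ f x := by
  rw [hKc.frontier_eq, Set.mem_sdiff]
  refine and_congr_right fun hxK ↦ ⟨hK.exists_forall_le_of_notMem_interior hxK, ?_⟩
  rintro ⟨f, hf, hmax⟩ hx
  -- Fermat: a linear functional with a local maximum vanishes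
  have : IsLocalMax f x := Filter.mem_of_superset (mem_interior_iff_mem_nhds.1 hx) hmax
  exact hf (by simpa using this.hasFDerivAt_eq_zero f.toContinuousLinearMap.hasFDerivAt)

namespace Orientation

variable {E : Type*} [NormedAddCommGroup E] [InnerProductSpace ℝ E]
  [Fact (Module.finrank ℝ E = 2)] (o : Orientation ℝ E (Fin 2))

theorem exists_areaForm_eq (f : E →ₗ[ℝ] ℝ) : ∃ c, o.areaForm c = f := by
  have : FiniteDimensional ℝ E := .of_fact_finrank_eq_two
  refine ⟨-o.rightAngleRotation ((InnerProductSpace.toDual ℝ E).symm f.toContinuousLinearMap), ?_⟩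
  ext w
  simp [o.areaForm_rightAngleRotation_left]

theorem areaForm_ne_zero {a : E} (ha : a ≠ 0) : o.areaForm a ≠ 0 := fun h ↦ by
  simpa [o.areaForm_rightAngleRotation_right, ha] using
    LinearMap.congr_fun h (o.rightAngleRotation a)

end Orientation

namespace Complex

theorem areaForm_eq_norm_mul_sin (c w : ℂ) :
    ω c w = ‖c‖ * ‖w‖ * Real.sin (arg w - arg c) := by
  rw [Complex.areaForm, Real.sin_sub, mul_sub, ← mul_assoc]
  simp only [mul_im, conj_re, conj_im]
  rw [← norm_mul_cos_arg c, ← norm_mul_sin_arg c, ← norm_mul_cos_arg w, ← norm_mul_sin_arg w]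
  ring

theorem arg_div_nonneg_of_areaForm_nonneg {a b : ℂ} (h : 0 ≤ ω b a) : 0 ≤ arg (a / b) := by
  rw [Complex.areaForm, mul_im, conj_re, conj_im] at h
  rw [arg_nonneg_iff, div_im, ← sub_div]
  exact div_nonneg (by linarith) (normSq_nonneg b)

theorem convex_of_isPreconnected_of_areaForm_eq {c : ℂ} (hc : c ≠ 0) {M : ℝ} {T : Set ℂ}
    (hT : IsPreconnected T) (hTM : ∀ w ∈ T, ω c w = M) : Convex ℝ T := by
  let ρ : ℂ →L[ℝ] ℝ := innerSL ℝ c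
  have hρT : (ρ '' T).OrdConnected := (hT.image ρ ρ.continuous.continuousOn).ordConnected
  refine convex_iff_segment_subset.2 fun x hx y hy p hp ↦ ?_
  have hpM : ω c p = M :=
    (convex_hyperplane (ω c).isLinear M).segment_subset (hTM x hx) (hTM y hy) hp
  have hρp : ρ p ∈ Set.uIcc (ρ x) (ρ y) := by
    obtain ⟨a, b, ha, hb, hab, rfl⟩ := hp
    rw [← segment_eq_uIcc]
    exact ⟨a, b, ha, hb, hab, by simp only [map_add, map_smul, smul_eq_mul]⟩
  obtain ⟨t, ht, hρt⟩ := hρT.uIcc_subset ⟨x, hx, rfl⟩ ⟨y, hy, rfl⟩ hρp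
  -- `ρ` and `ω c` are the real and imaginary parts of `conj c * ·`
  have : conj c * t = conj c * p := by
    apply Complex.ext
    · simpa [ρ, Complex.inner, mul_comm] using hρt
    · simpa using (hTM t ht).trans hpM.symm
  rwa [← mul_left_cancel₀ ((map_ne_zero _).2 hc) this]

theorem convex_biUnion_segment_inter_areaForm_eq {c : ℂ} (hc : c ≠ 0) {M : ℝ} {u : ℕ → ℂ}
    {a b : ℕ} (hu : ∀ n ∈ Set.Icc a b, ω c (u n) = M) :
    Convex ℝ (⋃ k ∈ Set.Icc a b, segment ℝ (u k) (u (k + 1)) ∩ {w | ω c w = M}) := by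
  refine convex_of_isPreconnected_of_areaForm_eq hc (M := M)
    (IsPreconnected.biUnion_of_chain Set.ordConnected_Icc (fun k _ ↦ ?_) fun k _ hk ↦ ?_) ?_
  · exact ((convex_segment _ _).inter (convex_hyperplane (ω c).isLinear M)).isPreconnected
  · rw [Order.succ_eq_add_one] at hk ⊢
    exact ⟨u (k + 1), ⟨right_mem_segment _ _ _, hu _ hk⟩, left_mem_segment _ _ _, hu _ hk⟩
  · simp only [Set.mem_iUnion]
    rintro w ⟨k, -, -, hw⟩
    exact hw

end Complex

theorem ZMod.sum_range_natCast {m : ℕ} [NeZero m] {M : Type*} [AddCommMonoid M]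
    (F : ZMod m → M) : ∑ k ∈ range m, F k = ∑ i : ZMod m, F i :=
  sum_nbij' (↑) ZMod.val (fun _ _ ↦ mem_univ _) (fun i _ ↦ mem_range.2 (ZMod.val_lt i))
    (fun _ hk ↦ ZMod.val_cast_of_lt (mem_range.1 hk)) (fun i _ ↦ ZMod.natCast_zmod_val i)
    (fun _ _ ↦ rfl)

section Polygon

variable {m : ℕ}

noncomputable def edgeAngle (e : ZMod m → ℂ) (n : ℕ) : ℝ :=
  arg (e 0) + ∑ k ∈ range n, arg (e (k + 1) / e k)

theorem edgeAngle_zero (e : ZMod m → ℂ) : edgeAngle e 0 = arg (e 0) := by simp [edgeAngle]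

theorem edgeAngle_succ (e : ZMod m → ℂ) (n : ℕ) :
    edgeAngle e (n + 1) = edgeAngle e n + arg (e (n + 1) / e n) := by
  simp [edgeAngle, sum_range_succ, add_assoc]

theorem coe_edgeAngle {e : ZMod m → ℂ} (hne : ∀ i, e i ≠ 0) (n : ℕ) :
    (edgeAngle e n : Real.Angle) = arg (e n) := by
  induction n with
  | zero => simp [edgeAngle_zero]
  | succ n ih =>
    rw [edgeAngle_succ, Real.Angle.coe_add, ih, ← Complex.arg_mul_coe_angle (hne _)
      (div_ne_zero (hne _) (hne _)), mul_div_cancel₀ _ (hne _), Nat.cast_succ]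

theorem monotone_edgeAngle {e : ZMod m → ℂ} (hconv : ∀ i, 0 ≤ ω (e (i - 1)) (e i)) :
    Monotone (edgeAngle e) :=
  monotone_nat_of_le_succ fun n ↦ by
    rw [edgeAngle_succ, le_add_iff_nonneg_right]
    simpa using Complex.arg_div_nonneg_of_areaForm_nonneg (hconv (n + 1))

variable [NeZero m]

theorem edgeAngle_natCast_self {e : ZMod m → ℂ} (hturn : ∑ i, arg (e i / e (i - 1)) = 2 * π) :
    edgeAngle e m = edgeAngle e 0 + 2 * π := by
  rw [edgeAngle_zero, edgeAngle, ZMod.sum_range_natCast (fun i ↦ arg (e (i + 1) / e i)), ← hturn]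
  congr 1
  exact Fintype.sum_equiv (Equiv.addRight 1) _ _ fun i ↦ by simp

structure IsLocallyConvexOneTurn (v e : ZMod m → ℂ) : Prop where
  edge_eq : ∀ i, e i = v (i + 1) - v i
  edge_ne_zero : ∀ i, e i ≠ 0
  areaForm_nonneg : ∀ i, 0 ≤ ω (e (i - 1)) (e i)
  sum_arg_div : ∑ i, arg (e i / e (i - 1)) = 2 * π

namespace IsLocallyConvexOneTurn

variable {v e : ZMod m → ℂ}

theorem comp_add_right (h : IsLocallyConvexOneTurn v e) (j : ZMod m) :
    IsLocallyConvexOneTurn (fun i ↦ v (i + j)) (fun i ↦ e (i + j)) where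
  edge_eq i := by rw [h.edge_eq, add_right_comm]
  edge_ne_zero i := h.edge_ne_zero _
  areaForm_nonneg i := by simpa only [sub_add_eq_add_sub] using h.areaForm_nonneg (i + j)
  sum_arg_div := by
    rw [← h.sum_arg_div]
    exact Fintype.sum_equiv (Equiv.addRight j) _ _ fun i ↦ by simp [sub_add_eq_add_sub]

theorem areaForm_vertex_succ_sub (h : IsLocallyConvexOneTurn v e) (c : ℂ) (n : ℕ) :
    ω c (v (n + 1)) - ω c (v n) = ‖c‖ * ‖e n‖ * sin (edgeAngle e n - arg c) := by
  rw [← map_sub, ← h.edge_eq, Complex.areaForm_eq_norm_mul_sin, ← Real.Angle.sin_coe,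
    ← Real.Angle.sin_coe, Real.Angle.coe_sub, Real.Angle.coe_sub, coe_edgeAngle h.edge_ne_zero]

theorem areaForm_sub_vertex_zero_nonneg (h : IsLocallyConvexOneTurn v e) (j : ZMod m) :
    0 ≤ ω (e 0) (v j - v 0) := by
  have key := le_of_sin_increments (g := fun n : ℕ ↦ ω (e 0) (v n))
    (φ := fun n ↦ edgeAngle e n - edgeAngle e 0) (r := fun n ↦ ‖e 0‖ * ‖e n‖)
    (fun a b hab ↦ sub_le_sub_right (monotone_edgeAngle h.areaForm_nonneg hab) _)
    (fun _ ↦ by positivity)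
    (fun n ↦ by simpa [edgeAngle_zero] using h.areaForm_vertex_succ_sub (e 0) n) (by simp)
    (by simp [edgeAngle_natCast_self h.sum_arg_div]) (by simp) (ZMod.val_lt j).le
  simpa only [Nat.cast_zero, ZMod.natCast_zmod_val, map_sub, sub_nonneg] using key

theorem areaForm_sub_nonneg (h : IsLocallyConvexOneTurn v e) (i j : ZMod m) :
    0 ≤ ω (e i) (v j - v i) := by
  simpa using (h.comp_add_right i).areaForm_sub_vertex_zero_nonneg (j - i)

theorem areaForm_le_of_mem_segment (h : IsLocallyConvexOneTurn v e) {i : ZMod m} {x w : ℂ}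
    (hx : x ∈ segment ℝ (v i) (v (i + 1))) (hw : w ∈ convexHull ℝ (Set.range v)) :
    ω (e i) x ≤ ω (e i) w := by
  have hxi : ω (e i) x = ω (e i) (v i) := by
    refine (convex_hyperplane (ω (e i)).isLinear _).segment_subset rfl ?_ hx
    show ω (e i) (v (i + 1)) = ω (e i) (v i)
    rw [← sub_eq_zero, ← map_sub, ← h.edge_eq, Complex.orientation.areaForm_apply_self]
  rw [hxi]
  refine convexHull_min ?_ (convex_halfSpace_ge (ω (e i)).isLinear _) hw
  rintro _ ⟨j, rfl⟩
  have := h.areaForm_sub_nonneg i j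
  rwa [map_sub, sub_nonneg] at this

theorem areaForm_vertex_eq_of_le_of_le (h : IsLocallyConvexOneTurn v e) {c : ℂ}
    (hmin : ∀ j, ω c (v 0) ≤ ω c (v j)) {M : ℝ} (hmax : ∀ j, ω c (v j) ≤ M) {a b n : ℕ}
    (ha : ω c (v a) = M) (hb : ω c (v b) = M) (hbm : b < m) (han : a ≤ n) (hnb : n ≤ b) :
    ω c (v n) = M := by
  refine le_antisymm (hmax _) ?_
  have key := min_le_of_sin_increments (g := fun n : ℕ ↦ ω c (v n))
    (φ := fun n ↦ edgeAngle e n - arg c) (r := fun n ↦ ‖c‖ * ‖e n‖)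
    (fun a b hab ↦ sub_le_sub_right (monotone_edgeAngle h.areaForm_nonneg hab) _)
    (fun _ ↦ by positivity) (fun n ↦ by simpa using h.areaForm_vertex_succ_sub c n)
    (by rw [edgeAngle_natCast_self h.sum_arg_div]; linarith) (by simp)
    (fun k ↦ by simpa using hmin k) han hnb hbm.le
  simpa only [ha, hb, min_self] using key

theorem mem_edges_of_forall_le_of_forall_ge (h : IsLocallyConvexOneTurn v e) {c : ℂ}
    (hc : c ≠ 0) (hmin : ∀ j, ω c (v 0) ≤ ω c (v j)) {z : ℂ}
    (hz : z ∈ convexHull ℝ (Set.range v)) (hmax : ∀ j, ω c (v j) ≤ ω c z) :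
    z ∈ ⋃ i, segment ℝ (v i) (v (i + 1)) := by
  set M := ω c z
  have hz' := mem_convexHull_setOf_eq_of_forall_le (f := ω c) hz
    (by rintro _ ⟨j, rfl⟩; exact hmax j)
  obtain ⟨_, ⟨j₀, rfl⟩, hj₀⟩ : {y ∈ Set.range v | ω c y = M}.Nonempty := by
    by_contra! hempty
    rwa [hempty, convexHull_empty] at hz'
  let A := (range m).filter fun n : ℕ ↦ ω c (v n) = M
  have hA : ∀ j : ZMod m, ω c (v j) = M → j.val ∈ A := fun j hj ↦
    mem_filter.2 ⟨mem_range.2 (ZMod.val_lt j), by rwa [ZMod.natCast_zmod_val]⟩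
  have hAne : A.Nonempty := ⟨_, hA j₀ hj₀⟩
  obtain ⟨hbm, hb⟩ := mem_filter.1 (A.max'_mem hAne)
  have hcontig : ∀ n, A.min' hAne ≤ n → n ≤ A.max' hAne → ω c (v n) = M :=
    fun n ↦ h.areaForm_vertex_eq_of_le_of_le hmin hmax (mem_filter.1 (A.min'_mem hAne)).2 hb
      (mem_range.1 hbm)
  let T := ⋃ k ∈ Set.Icc (A.min' hAne) (A.max' hAne),
    segment ℝ (v k) (v ((k + 1 : ℕ) : ZMod m)) ∩ {w | ω c w = M}
  have hT : Convex ℝ T := Complex.convex_biUnion_segment_inter_areaForm_eq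
    (u := fun n : ℕ ↦ v n) hc fun n hn ↦ hcontig n hn.1 hn.2
  have hTop : {y ∈ Set.range v | ω c y = M} ⊆ T := by
    rintro _ ⟨⟨j, rfl⟩, hj⟩
    simp only [T, Set.mem_iUnion]
    refine ⟨j.val, ⟨A.min'_le _ (hA j hj), A.le_max' _ (hA j hj)⟩, ?_, hj⟩
    simpa using left_mem_segment ℝ (v j) (v (j + 1))
  have hzT := convexHull_min hTop hT hz'
  simp only [T, Set.mem_iUnion] at hzT ⊢
  obtain ⟨k, -, hk, -⟩ := hzT
  exact ⟨k, by rwa [Nat.cast_succ] at hk⟩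

theorem mem_edges_of_forall_le (h : IsLocallyConvexOneTurn v e) {c : ℂ} (hc : c ≠ 0) {z : ℂ}
    (hz : z ∈ convexHull ℝ (Set.range v)) (hmax : ∀ j, ω c (v j) ≤ ω c z) :
    z ∈ ⋃ i, segment ℝ (v i) (v (i + 1)) := by
  obtain ⟨i₀, -, hi₀⟩ := exists_min_image univ (fun i ↦ ω c (v i)) univ_nonempty
  have hrange : Set.range (fun i ↦ v (i + i₀)) = Set.range v :=
    (Equiv.addRight i₀).surjective.range_comp v
  have := (h.comp_add_right i₀).mem_edges_of_forall_le_of_forall_ge hc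
    (fun j ↦ by simpa using hi₀ _ (mem_univ _)) (hrange ▸ hz) fun j ↦ hmax _
  simp only [Set.mem_iUnion] at this ⊢
  obtain ⟨i, hi⟩ := this
  exact ⟨i + i₀, by rwa [add_right_comm]⟩

end IsLocallyConvexOneTurn

end Polygon

theorem locally_convex_polygon_is_convex_general (m : ℕ) [NeZero m]
    (v : ZMod m → ℂ) (e : ZMod m → ℂ)
    (he : ∀ i, e i = v (i + 1) - v i)
    (hne : ∀ i, e i ≠ 0)
    (hconv : ∀ i, 0 ≤ ((starRingEnd ℂ) (e (i - 1)) * e i).im)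
    (hturn : ∑ i : ZMod m, Complex.arg (e i / e (i - 1)) = 2 * Real.pi) :
    frontier (convexHull ℝ (Set.range v)) = ⋃ i : ZMod m, segment ℝ (v i) (v (i + 1)) := by
  have h : IsLocallyConvexOneTurn v e :=
    ⟨he, hne, fun i ↦ by simpa only [Complex.areaForm] using hconv i, hturn⟩
  have hK := convex_convexHull ℝ (Set.range v)
  have hKc := ((Set.finite_range v).isCompact_convexHull (𝕜 := ℝ)).isClosed
  ext x
  rw [hK.mem_frontier_iff_exists_forall_le hKc]
  constructor
  · rintro ⟨hxK, f, hf, hmax⟩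
    obtain ⟨c, rfl⟩ := Complex.orientation.exists_areaForm_eq f
    exact h.mem_edges_of_forall_le (by rintro rfl; exact hf (map_zero _)) hxK
      fun j ↦ hmax _ (subset_convexHull ℝ _ ⟨j, rfl⟩)
  · simp only [Set.mem_iUnion]
    rintro ⟨i, hx⟩
    refine ⟨hK.segment_subset (subset_convexHull ℝ _ ⟨i, rfl⟩)
      (subset_convexHull ℝ _ ⟨i + 1, rfl⟩) hx, ω (-e i),
      Complex.orientation.areaForm_ne_zero (neg_ne_zero.2 (hne i)), fun w hw ↦ ?_⟩
    simpa only [map_neg, LinearMap.neg_apply, neg_le_neg_iff] using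
      h.areaForm_le_of_mem_segment hx hw

/-- Let `v 0, ..., v (m-1)` (`m ≥ 3`, indices mod `m`) be the vertices of a
closed polygonal curve in the plane (identified with `ℂ`), with nondegenerate
edges `e i = v (i+1) - v i`. If the polygon is locally convex at every vertex —
the cross product of consecutive edge vectors is weakly positive — and the edge
directions make exactly one full turn (the exterior angles sum to `2π`), then
the polygonal curve is the boundary of a convex polygon: the boundary of the
convex hull of the vertices is the union of the edges. -/
theorem locally_convex_polygon_is_convex (m : ℕ) [NeZero m] (hm : 3 ≤ m)
    (v : ZMod m → ℂ) (e : ZMod m → ℂ)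
    (he : ∀ i, e i = v (i + 1) - v i)
    (hne : ∀ i, e i ≠ 0)
    (hconv : ∀ i, 0 ≤ ((starRingEnd ℂ) (e (i - 1)) * e i).im)
    (hturn : ∑ i : ZMod m, Complex.arg (e i / e (i - 1)) = 2 * Real.pi) :
    frontier (convexHull ℝ (Set.range v)) = ⋃ i : ZMod m, segment ℝ (v i) (v (i + 1)) :=
  locally_convex_polygon_is_convex_general m v e he hne hconv hturn
end

section
/- Let n > 2 and let M = (M, r) be an immersion of a compact connected (n−1)-manifold into hyperbolic space H^n such that r(M) is bounded, M is complete in the induced metric, locally convex at every point, and strictly locally convex at at least one point. Then, identifying H^n with the open unit ball via the Klein model, the conditions of the Euclidean van Heijenoort theorem hold for the same map into R^n; in particular, local convexity at a point with respect to the hyperbolic structure is equivalent to local convexity with respect to the Euclidean structure of the Klein model. -/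
/-- In a convex set with nonempty interior, interior points exist arbitrarily
close to any point of the closure. -/
lemma aux_interior_near {E : Type*} [NormedAddCommGroup E] [NormedSpace ℝ E]
    {K : Set E} (hK : Convex ℝ K) {y : E} (hy : y ∈ interior K)
    {p : E} (hp : p ∈ closure K) {ε : ℝ} (hε : 0 < ε) :
    ∃ z ∈ interior K, dist z p < ε := by
  obtain ⟨t, ht0, ht1, htd⟩ : ∃ t : ℝ, 0 < t ∧ t ≤ 1 ∧ t * ‖y - p‖ < ε := by
    rcases eq_or_ne (‖y - p‖) 0 with h | h
    · exact ⟨1, one_pos, le_refl 1, by simpa [h] using hε⟩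
    · have hpos : 0 < ‖y - p‖ := lt_of_le_of_ne (norm_nonneg _) (Ne.symm h)
      refine ⟨min 1 (ε / (2 * ‖y - p‖)), lt_min one_pos (by positivity), min_le_left _ _, ?_⟩
      calc min 1 (ε / (2 * ‖y - p‖)) * ‖y - p‖ ≤ (ε / (2 * ‖y - p‖)) * ‖y - p‖ := by
            exact mul_le_mul_of_nonneg_right (min_le_right _ _) (norm_nonneg _)
        _ = ε / 2 := by field_simp
        _ < ε := by linarith
  refine ⟨t • y + (1 - t) • p, hK.combo_interior_closure_mem_interior hy hp ht0
    (by linarith) (by ring), ?_⟩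
  have : t • y + (1 - t) • p - p = t • (y - p) := by
    rw [smul_sub, sub_smul, one_smul]; abel
  rw [dist_eq_norm, this, norm_smul, Real.norm_eq_abs, abs_of_pos ht0]
  exact htd

/-- Klein model transfer: let `n > 2` and let `M` be (the image of) a surface in
the Klein model of `H^n`, i.e. `M` lies in the open unit ball of `ℝ^n`, and
suppose `M` is bounded in `H^n` (its closure stays inside the open ball). Then
at every point `p ∈ M`, local convexity with respect to the hyperbolic structure
(a neighborhood of `p` in `M` lies on the boundary of a convex body contained in
the ball — hyperbolically convex sets in the Klein model are exactly the
Euclidean-convex subsets of the ball) is equivalent to local convexity with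
respect to the Euclidean structure (a neighborhood of `p` in `M` lies on the
boundary of a Euclidean convex body); thus the hypotheses of the Euclidean
van Heijenoort theorem hold for the same map into `ℝ^n`. -/
theorem klein_model_local_convexity_equiv (n : ℕ) (hn : 2 < n)
    (M : Set (EuclideanSpace ℝ (Fin n)))
    (hM : M ⊆ Metric.ball (0 : EuclideanSpace ℝ (Fin n)) 1)
    (hMbdd : closure M ⊆ Metric.ball (0 : EuclideanSpace ℝ (Fin n)) 1)
    (p : EuclideanSpace ℝ (Fin n)) (hp : p ∈ M) :
    (∃ K : Set (EuclideanSpace ℝ (Fin n)),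
        K ⊆ Metric.ball (0 : EuclideanSpace ℝ (Fin n)) 1 ∧ Convex ℝ K ∧
        (interior K).Nonempty ∧ p ∈ frontier K ∧ ∃ U ∈ nhds p, M ∩ U ⊆ frontier K) ↔
      (∃ K : Set (EuclideanSpace ℝ (Fin n)), Convex ℝ K ∧
        (interior K).Nonempty ∧ p ∈ frontier K ∧ ∃ U ∈ nhds p, M ∩ U ⊆ frontier K) := by
  constructor
  · rintro ⟨K, -, h1, h2, h3, h4⟩
    exact ⟨K, h1, h2, h3, h4⟩
  · rintro ⟨K, hKconv, ⟨y, hy⟩, hpf, U, hU, hMU⟩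
    -- shrink: intersect K with a small closed ball around p inside the unit ball
    have hp1 : dist p 0 < 1 := hM hp
    set ε : ℝ := (1 - dist p 0) / 2 with hε
    have hε0 : 0 < ε := by simp only [hε]; linarith
    set K' : Set (EuclideanSpace ℝ (Fin n)) := K ∩ Metric.closedBall p ε with hK'
    have hsub : K' ⊆ Metric.ball (0 : EuclideanSpace ℝ (Fin n)) 1 := by
      intro x hx
      have hxp : dist x p ≤ ε := hx.2
      have : dist x 0 ≤ dist x p + dist p 0 := dist_triangle _ _ _
      have : dist x 0 ≤ ε + dist p 0 := by linarith
      simp only [Metric.mem_ball]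
      have : ε + dist p 0 < 1 := by simp only [hε]; linarith
      linarith
    have hconv' : Convex ℝ K' := hKconv.inter (convex_closedBall p ε)
    -- interior nonempty
    obtain ⟨z, hzK, hzd⟩ := aux_interior_near hKconv hy hpf.1 hε0
    have hzint : z ∈ interior K' := by
      have hopen : IsOpen (interior K ∩ Metric.ball p ε) :=
        isOpen_interior.inter Metric.isOpen_ball
      have hsub2 : interior K ∩ Metric.ball p ε ⊆ K' := fun x hx =>
        ⟨interior_subset hx.1, Metric.ball_subset_closedBall hx.2⟩
      exact interior_maximal hsub2 hopen ⟨hzK, hzd⟩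
    -- key: frontier K ∩ ball p ε ⊆ frontier K'
    have hkey : ∀ x ∈ frontier K, dist x p < ε → x ∈ frontier K' := by
      intro x hx hxd
      constructor
      · -- x ∈ closure K'
        rw [mem_closure_iff]
        intro o ho hxo
        have ho' : IsOpen (o ∩ Metric.ball p ε) := ho.inter Metric.isOpen_ball
        have hxo' : x ∈ o ∩ Metric.ball p ε := ⟨hxo, hxd⟩
        obtain ⟨w, hw1, hw2⟩ := (mem_closure_iff.mp hx.1) _ ho' hxo'
        exact ⟨w, hw1.1, hw2, Metric.ball_subset_closedBall hw1.2⟩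
      · -- x ∉ interior K'
        intro hxint
        exact hx.2 (interior_mono Set.inter_subset_left hxint)
    refine ⟨K', hsub, hconv', ⟨z, hzint⟩, hkey p hpf (by simpa using hε0),
      U ∩ Metric.ball p ε, Filter.inter_mem hU (Metric.ball_mem_nhds p hε0), ?_⟩
    rintro x ⟨hxM, hxU, hxb⟩
    exact hkey x (hMU ⟨hxM, hxU⟩) hxb
end
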